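/- Let Γ be a finite simple graph on vertex set V = {1,...,n} with edge ideal I in R = k[x_1,...,x_n], and let a ∈ ℕ^n. Then the monomial x^a = x_1^{a_1}···x_n^{a_n} belongs to I^t if and only if the matching number ν(Γ_a) of the vertex-weighted graph Γ_a is at least t, where a matching of Γ_a is a family of (not necessarily distinct) edges of Γ such that each vertex i appears in at most a_i of these edges. -/

import Mathlib

open MvPolynomial

section Defs

variable {V : Type*}

/-- A matching of the vertex-weighted graph `Γ_a`: a multiset of (oriented) edges of `G`
in which every vertex `i` appears at most `a i` times. -/
def IsWMatching [DecidableEq V] (G : SimpleGraph V) (a : V → ℕ)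
    (M : Multiset (V × V)) : Prop :=
  (∀ e ∈ M, G.Adj e.1 e.2) ∧
    ∀ i : V, (M.map Prod.fst).count i + (M.map Prod.snd).count i ≤ a i

/-- The matching number `ν(Γ_a)` of the vertex-weighted graph `Γ_a`. -/
noncomputable def wNu [DecidableEq V] (G : SimpleGraph V) (a : V → ℕ) : ℕ :=
  sSup {k : ℕ | ∃ M : Multiset (V × V), IsWMatching G a M ∧ Multiset.card M = k}

/-- A perfect matching of `Γ_a`: every vertex `i` appears exactly `a i` times. -/
def IsWPerfectMatching [DecidableEq V] (G : SimpleGraph V) (a : V → ℕ)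
    (M : Multiset (V × V)) : Prop :=
  (∀ e ∈ M, G.Adj e.1 e.2) ∧
    ∀ i : V, (M.map Prod.fst).count i + (M.map Prod.snd).count i = a i

/-- `Γ_a` is matching-critical: lowering the weight of any supported vertex
does not decrease the matching number. -/
def MatchingCritical [DecidableEq V] (G : SimpleGraph V) (a : V → ℕ) : Prop :=
  ∀ i : V, a i ≠ 0 → wNu G (a - Pi.single i 1) = wNu G a

/-- The polarization `p(Γ_a)`: each vertex `i` is replaced by `a i` copies. -/
def polarization (G : SimpleGraph V) (a : V → ℕ) :
    SimpleGraph (Σ i : V, Fin (a i)) where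
  Adj u v := G.Adj u.1 v.1
  symm := ⟨fun _ _ h => G.symm.symm _ _ h⟩
  loopless := ⟨fun u h => G.irrefl h⟩

/-- The base graph of `Γ_a` as a spanning subgraph of `G`: edges of `G` between
supported vertices (vertices of weight `0` become isolated). -/
def baseGraph (G : SimpleGraph V) (a : V → ℕ) : SimpleGraph V where
  Adj i j := G.Adj i j ∧ a i ≠ 0 ∧ a j ≠ 0
  symm := ⟨fun _ _ h => ⟨h.1.symm, h.2.2, h.2.1⟩⟩
  loopless := ⟨fun _ h => G.irrefl h.1⟩

/-- An ear: a walk with endpoints `u`, `v` and list of inner vertices `inner`. -/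
structure PreEar (V : Type*) where
  u : V
  inner : List V
  v : V

namespace PreEar

/-- The length of an ear. -/
def len (E : PreEar V) : ℕ := E.inner.length + 1

/-- The vertex list of an ear. -/
def verts (E : PreEar V) : List V := E.u :: (E.inner ++ [E.v])

/-- The ear is a walk in `G`. -/
def IsWalk (G : SimpleGraph V) (E : PreEar V) : Prop := List.Chain' G.Adj E.verts

end PreEar

/-- Endpoints of each subsequent ear belong to earlier ears
(`S` accumulates the vertices seen so far). -/
def earsOk (G : SimpleGraph V) : List (PreEar V) → List V → Prop
  | [], _ => True
  | E :: rest, S => E.u ∈ S ∧ E.v ∈ S ∧ earsOk G rest (S ++ E.verts)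

/-- The number of appearances of `i` in an ear decomposition, not as an endpoint of
the subsequent ears. -/
def earCount [DecidableEq V] (i : V) : List (PreEar V) → ℕ
  | [] => 0
  | E0 :: rest => (E0.u :: E0.inner).count i + (rest.map fun E => E.inner.count i).sum

/-- The number of even ears of an ear decomposition. -/
def evenEars (D : List (PreEar V)) : ℕ :=
  D.countP fun E => E.inner.length % 2 == 1

/-- An ear decomposition starting with an odd closed walk. -/
def IsInitOddDecomp (G : SimpleGraph V) (D : List (PreEar V)) : Prop :=
  ∃ E0 rest, D = E0 :: rest ∧ E0.u = E0.v ∧ Odd E0.len ∧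
    (∀ E ∈ D, E.IsWalk G) ∧ earsOk G rest E0.verts

/-- A family of initially odd ear decompositions of the connected components of the
weighted graph `Γ_a`: each member is an initially odd ear decomposition, every vertex `i`
appears exactly `a i` times (not as an endpoint of subsequent ears), and different members
lie in different connected components of the base graph. -/
def IsInitOddFamily [DecidableEq V] (G : SimpleGraph V) (a : V → ℕ)
    (L : List (List (PreEar V))) : Prop :=
  (∀ D ∈ L, IsInitOddDecomp G D) ∧
  (∀ i : V, a i = (L.map (earCount i)).sum) ∧
  L.Pairwise (fun D1 D2 =>
    ∀ x y : V, (∃ E ∈ D1, x ∈ E.verts) → (∃ E ∈ D2, y ∈ E.verts) →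
      ¬ (baseGraph G a).Reachable x y)

/-- `φ*(Γ_a)`: the minimal total number of even ears in families of initially odd
ear decompositions of the connected components. -/
noncomputable def phiStar [DecidableEq V] (G : SimpleGraph V) (a : V → ℕ) : ℕ :=
  sInf {k : ℕ | ∃ L, IsInitOddFamily G a L ∧ (L.map evenEars).sum = k}

/-- `μ*(Γ) = (φ*(Γ) + n - c) / 2`, where `n` is the number of vertices and `c` the
number of connected components. -/
noncomputable def muStar [DecidableEq V] (G : SimpleGraph V) : ℕ :=
  (phiStar G (fun _ => 1) + Nat.card V - Nat.card G.ConnectedComponent) / 2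

/-- Every connected component of `G` contains an odd cycle (equivalently, an odd
closed walk), i.e. every connected component is non-bipartite. -/
def StronglyNonBip (G : SimpleGraph V) : Prop :=
  ∀ v : V, ∃ u, G.Reachable v u ∧ ∃ p : G.Walk u u, Odd p.length

/-- `G` is non-bipartite: it contains an odd closed walk. -/
def NonBip (G : SimpleGraph V) : Prop :=
  ∃ (u : V) (p : G.Walk u u), Odd p.length

/-- A vertex cover of `G`. -/
def IsCover (G : SimpleGraph V) (F : Set V) : Prop :=
  ∀ ⦃i j : V⦄, G.Adj i j → i ∈ F ∨ j ∈ F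

/-- The closed neighborhood `N[U]`. -/
def closedNbhd (G : SimpleGraph V) (U : Set V) : Set V :=
  {v | v ∈ U ∨ ∃ u ∈ U, G.Adj v u}

/-- The core `c(F) = F \ N[V \ F]` of a cover `F`. -/
def core (G : SimpleGraph V) (F : Set V) : Set V :=
  {i ∈ F | ∀ j, G.Adj i j → j ∈ F}

/-- `U` is a dominating set of `G`: `N[U] = V`. -/
def IsDominating (G : SimpleGraph V) (U : Set V) : Prop :=
  ∀ v : V, v ∈ U ∨ ∃ u ∈ U, G.Adj v u

/-- The edge ideal of a graph `G` in the polynomial ring over `k`. -/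
noncomputable def edgeIdeal (k : Type*) [Field k] (G : SimpleGraph V) :
    Ideal (MvPolynomial V k) :=
  Ideal.span {p | ∃ i j : V, G.Adj i j ∧ p = X i * X j}

/-- The maximal homogeneous ideal `(x_1, ..., x_n)`. -/
noncomputable def maxIdeal (k : Type*) [Field k] (V : Type*) :
    Ideal (MvPolynomial V k) :=
  Ideal.span (Set.range (X : V → MvPolynomial V k))

/-- The monomial `x^a = x_1^{a_1} ⋯ x_n^{a_n}`. -/
noncomputable def monA (k : Type*) [Field k] [Fintype V] (a : V → ℕ) :
    MvPolynomial V k :=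
  ∏ i : V, X i ^ a i

/-- A connected minimal `s`-base: a connected non-bipartite graph with `μ* = s`
containing no proper spanning subgraph which is connected non-bipartite with `μ* = s`. -/
def ConnMinBase [DecidableEq V] (G : SimpleGraph V) (s : ℕ) : Prop :=
  G.Connected ∧ NonBip G ∧ muStar G = s ∧
    ∀ H : SimpleGraph V, H ≤ G → H ≠ G →
      ¬ (H.Connected ∧ NonBip H ∧ muStar H = s)

open Classical in
/-- The restriction of the weight `a` to the connected component of `i`
in the base graph of `Γ_a`. -/
noncomputable def compWeight [DecidableEq V] (G : SimpleGraph V) (a : V → ℕ) (i : V) :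
    V → ℕ :=
  fun j => if (baseGraph G a).Reachable i j then a j else 0

end Defs

/-!
`I^t` is the monomial ideal generated by the products of `t` edge monomials, i.e. by the
monomials whose exponent is the degree vector of a multiset of `t` edges. A monomial lies in
a monomial ideal iff it is divisible by one of the generators, and `x^a` is divisible by the
product over a multiset `M` of edges iff `M` is a matching of `Γ_a`. Since sub-multisets of
matchings are matchings, a matching of size at least `t` yields one of size exactly `t`.
-/

section EdgeIdealPower

variable {V : Type*}

noncomputable def edgeExponent (e : V × V) : V →₀ ℕ :=
  Finsupp.single e.1 1 + Finsupp.single e.2 1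

noncomputable def multisetExponent (M : Multiset (V × V)) : V →₀ ℕ :=
  (M.map edgeExponent).sum

@[simp]
theorem multisetExponent_zero : multisetExponent (0 : Multiset (V × V)) = 0 := by
  simp [multisetExponent]

@[simp]
theorem multisetExponent_cons (e : V × V) (M : Multiset (V × V)) :
    multisetExponent (e ::ₘ M) = edgeExponent e + multisetExponent M := by
  simp [multisetExponent]

theorem multisetExponent_apply [DecidableEq V] (M : Multiset (V × V)) (i : V) :
    multisetExponent M i = (M.map Prod.fst).count i + (M.map Prod.snd).count i := by
  induction M using Multiset.induction with
  | empty => simp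
  | cons e M ih =>
    simp only [multisetExponent_cons, Multiset.map_cons, Multiset.count_cons, edgeExponent,
      Finsupp.add_apply, Finsupp.single_eq_pi_single, Pi.single_apply, ih]
    split_ifs <;> omega

theorem multiset_prod_X_mul_X_eq_monomial (R : Type*) [CommSemiring R] (M : Multiset (V × V)) :
    (M.map fun e => X e.1 * X e.2 : Multiset (MvPolynomial V R)).prod =
      monomial (multisetExponent M) 1 := by
  induction M using Multiset.induction with
  | empty => simp
  | cons e M ih =>
    rw [Multiset.map_cons, Multiset.prod_cons, ih, multisetExponent_cons, edgeExponent, X, X,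
      monomial_mul, monomial_mul, one_mul, one_mul]

def edgeMultisets (G : SimpleGraph V) (t : ℕ) : Set (Multiset (V × V)) :=
  {M | (∀ e ∈ M, G.Adj e.1 e.2) ∧ Multiset.card M = t}

theorem edgeMultisets_zero (G : SimpleGraph V) : edgeMultisets G 0 = {0} := by
  ext M
  simp +contextual [edgeMultisets]

theorem edgeMultisets_succ (G : SimpleGraph V) (t : ℕ) :
    edgeMultisets G (t + 1) =
      Set.image2 (fun M e => e ::ₘ M) (edgeMultisets G t) {e | G.Adj e.1 e.2} := by
  ext M
  simp only [edgeMultisets, Set.mem_image2, Set.mem_ofPred_eq]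
  constructor
  · rintro ⟨hadj, hcard⟩
    obtain ⟨e, M, rfl, rfl⟩ := Multiset.card_eq_succ_iff.mp hcard
    exact ⟨M, ⟨fun e' he' => hadj e' (Multiset.mem_cons_of_mem he'), rfl⟩, e,
      hadj e (Multiset.mem_cons_self e M), rfl⟩
  · rintro ⟨M, ⟨hadj, rfl⟩, e, he, rfl⟩
    exact ⟨Multiset.forall_mem_cons.mpr ⟨he, hadj⟩, Multiset.card_cons e M⟩

theorem edgeIdeal_pow_eq_span (k : Type*) [Field k] (G : SimpleGraph V) (t : ℕ) :
    edgeIdeal k G ^ t = Ideal.span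
      ((fun d => monomial d (1 : k)) '' (multisetExponent '' edgeMultisets G t)) := by
  rw [Set.image_image]
  simp_rw [← multiset_prod_X_mul_X_eq_monomial]
  induction t with
  | zero => simp [edgeMultisets_zero, Ideal.one_eq_top]
  | succ t ih =>
    rw [pow_succ, ih, edgeIdeal, Ideal.span_mul_span', edgeMultisets_succ, Set.image_image2]
    congr 1
    ext p
    simp [Set.mem_mul, mul_comm]

theorem isWMatching_iff [DecidableEq V] (G : SimpleGraph V) (a : V → ℕ)
    (M : Multiset (V × V)) :
    IsWMatching G a M ↔ (∀ e ∈ M, G.Adj e.1 e.2) ∧ ∀ i, multisetExponent M i ≤ a i := by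
  simp only [IsWMatching, multisetExponent_apply]

theorem IsWMatching.mono [DecidableEq V] {G : SimpleGraph V} {a : V → ℕ}
    {M M' : Multiset (V × V)} (hM : IsWMatching G a M) (hle : M' ≤ M) : IsWMatching G a M' :=
  ⟨fun e he => hM.1 e (Multiset.mem_of_le hle he), fun i =>
    (add_le_add (Multiset.count_le_of_le _ (Multiset.map_le_map hle))
      (Multiset.count_le_of_le _ (Multiset.map_le_map hle))).trans (hM.2 i)⟩

theorem IsWMatching.card_le_sum [Fintype V] [DecidableEq V] {G : SimpleGraph V} {a : V → ℕ}
    {M : Multiset (V × V)} (hM : IsWMatching G a M) : Multiset.card M ≤ ∑ i, a i :=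
  calc Multiset.card M = ∑ i, (M.map Prod.fst).count i := by
        rw [← Multiset.card_map Prod.fst, ← Multiset.toFinset_sum_count_eq]
        exact Finset.sum_subset (Finset.subset_univ _) fun i _ hi => by simpa using hi
    _ ≤ ∑ i, a i := Finset.sum_le_sum fun i _ => (Nat.le_add_right _ _).trans (hM.2 i)

theorem le_wNu_iff [Fintype V] [DecidableEq V] (G : SimpleGraph V) (a : V → ℕ) (t : ℕ) :
    t ≤ wNu G a ↔ ∃ M, IsWMatching G a M ∧ Multiset.card M = t := by
  have hbdd : BddAbove {k | ∃ M, IsWMatching G a M ∧ Multiset.card M = k} :=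
    ⟨∑ i, a i, by rintro _ ⟨M, hM, rfl⟩; exact hM.card_le_sum⟩
  constructor
  · intro ht
    have hne : {k | ∃ M, IsWMatching G a M ∧ Multiset.card M = k}.Nonempty :=
      ⟨0, 0, ⟨by simp, fun i => by simp⟩, rfl⟩
    obtain ⟨M, hM, hcard⟩ := Nat.sSup_mem hne hbdd
    have hpos : 0 < Multiset.card (Multiset.powersetCard t M) := by
      rw [Multiset.card_powersetCard]
      exact Nat.choose_pos (hcard ▸ ht)
    obtain ⟨M', hM'⟩ := Multiset.card_pos_iff_exists_mem.mp hpos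
    obtain ⟨hle, hcard'⟩ := Multiset.mem_powersetCard.mp hM'
    exact ⟨M', hM.mono hle, hcard'⟩
  · rintro ⟨M, hM, rfl⟩
    exact le_csSup hbdd ⟨M, hM, rfl⟩

theorem monA_eq_monomial (k : Type*) [Field k] [Fintype V] (a : V → ℕ) :
    monA k a = monomial (Finsupp.equivFunOnFinite.symm a) 1 := by
  rw [monA, monomial_eq, C_1, one_mul, Finsupp.prod_fintype] <;> simp

end EdgeIdealPower

/-- `x^a ∈ I^t` iff `ν(Γ_a) ≥ t`. -/
theorem stmt_0 {k : Type*} [Field k] {n : ℕ} (G : SimpleGraph (Fin n))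
    (a : Fin n → ℕ) (t : ℕ) :
    monA k a ∈ (edgeIdeal k G) ^ t ↔ t ≤ wNu G a := by
  classical
  rw [edgeIdeal_pow_eq_span, monA_eq_monomial, mem_ideal_span_monomial_image, le_wNu_iff]
  simp only [support_monomial, one_ne_zero, if_false, Finset.mem_singleton, forall_eq,
    Set.exists_mem_image, edgeMultisets, Set.mem_ofPred_eq, Finsupp.le_def,
    Finsupp.equivFunOnFinite_symm_apply_apply, isWMatching_iff]
  exact exists_congr fun _ => and_right_comm
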